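/- Let K_i = V_i ⊗ U_i with U_i, V_i ∈ S++^n, and let α₁,…,α_n be the eigenvalues of V₀^{1/2} V₁ V₀^{1/2} and β₁,…,β_n the eigenvalues of U₀^{1/2} U₁ U₀^{1/2}. Then tr((K₀^{1/2} K₁ K₀^{1/2})^{1/2}) = Σ_{p=1}^n Σ_{q=1}^n √(α_p β_q). -/

import Mathlib

open Matrix Kronecker

/-- The positive semidefinite square root of a positive semidefinite matrix,
extended by `0` to all matrices.  On symmetric positive definite matrices this
is the unique symmetric positive definite square root. -/
noncomputable def matSqrt {m : Type*} [Fintype m] [DecidableEq m]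
    (A : Matrix m m ℝ) : Matrix m m ℝ :=
  open scoped Classical in
  if h : A.PosSemidef then
    (h.1.eigenvectorUnitary : Matrix m m ℝ) * diagonal ((↑) ∘ Real.sqrt ∘ h.1.eigenvalues) *
      (star h.1.eigenvectorUnitary : Matrix m m ℝ)
  else 0

/-- The eigenvalue tuple of a Hermitian matrix, extended by `0`. -/
noncomputable def eigs {m : Type*} [Fintype m] [DecidableEq m]
    (A : Matrix m m ℝ) : m → ℝ :=
  open scoped Classical in
  if h : A.IsHermitian then h.eigenvalues else 0

/-!
By uniqueness of the positive square root, `(A ⊗ B)^{1/2} = A^{1/2} ⊗ B^{1/2}`. Hence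
`K₀^{1/2} K₁ K₀^{1/2} = (V₀^{1/2} V₁ V₀^{1/2}) ⊗ (U₀^{1/2} U₁ U₀^{1/2})`, its square root is
again a Kronecker product, and the trace of a Kronecker product is the product of the traces,
each being a sum of square roots of eigenvalues.
-/
open scoped MatrixOrder

section matSqrt

variable {m p : Type*} [Fintype m] [DecidableEq m] [Fintype p] [DecidableEq p]

lemma matSqrt_eq_cfcSqrt {A : Matrix m m ℝ} (hA : A.PosSemidef) : matSqrt A = CFC.sqrt A := by
  rw [matSqrt, dif_pos hA, CFC.sqrt_eq_real_sqrt A hA.nonneg, cfcₙ_eq_cfc, hA.1.cfc_eq,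
    IsHermitian.cfc, Unitary.conjStarAlgAut_apply]
  rfl

lemma posSemidef_matSqrt {A : Matrix m m ℝ} (hA : A.PosSemidef) : (matSqrt A).PosSemidef := by
  rw [matSqrt_eq_cfcSqrt hA]
  exact (CFC.sqrt_nonneg A).posSemidef

lemma matSqrt_mul_self {A : Matrix m m ℝ} (hA : A.PosSemidef) : matSqrt A * matSqrt A = A := by
  rw [matSqrt_eq_cfcSqrt hA]
  exact CFC.sqrt_mul_sqrt_self A hA.nonneg

lemma matSqrt_eq_of_mul_self_eq {A S : Matrix m m ℝ} (hS : S.PosSemidef) (h : S * S = A) :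
    matSqrt A = S := by
  have hA : A.PosSemidef := by
    simpa only [← h, hS.1.eq] using posSemidef_conjTranspose_mul_self S
  rw [matSqrt_eq_cfcSqrt hA]
  exact CFC.sqrt_unique h hS.nonneg

lemma matSqrt_kronecker {A : Matrix m m ℝ} {B : Matrix p p ℝ}
    (hA : A.PosSemidef) (hB : B.PosSemidef) : matSqrt (A ⊗ₖ B) = matSqrt A ⊗ₖ matSqrt B :=
  matSqrt_eq_of_mul_self_eq ((posSemidef_matSqrt hA).kronecker (posSemidef_matSqrt hB)) <| by
    rw [← mul_kronecker_mul, matSqrt_mul_self hA, matSqrt_mul_self hB]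

lemma posSemidef_matSqrt_mul_mul_matSqrt {A B : Matrix m m ℝ}
    (hA : A.PosSemidef) (hB : B.PosSemidef) : (matSqrt A * B * matSqrt A).PosSemidef := by
  simpa only [(posSemidef_matSqrt hA).1.eq] using hB.mul_mul_conjTranspose_same (matSqrt A)

lemma trace_matSqrt {A : Matrix m m ℝ} (hA : A.PosSemidef) :
    (matSqrt A).trace = ∑ i, √(eigs A i) := by
  rw [matSqrt, dif_pos hA, eigs, dif_pos hA.1, trace_mul_cycle, Unitary.coe_star_mul_self,
    one_mul, trace_diagonal]
  simp

lemma eigs_nonneg {A : Matrix m m ℝ} (hA : A.PosSemidef) (i : m) : 0 ≤ eigs A i := by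
  rw [eigs, dif_pos hA.1]
  exact hA.eigenvalues_nonneg i

lemma trace_matSqrt_kronecker {A : Matrix m m ℝ} {B : Matrix p p ℝ}
    (hA : A.PosSemidef) (hB : B.PosSemidef) :
    (matSqrt (A ⊗ₖ B)).trace = ∑ i, ∑ j, √(eigs A i * eigs B j) := by
  rw [matSqrt_kronecker hA hB, trace_kronecker, trace_matSqrt hA, trace_matSqrt hB,
    Finset.sum_mul_sum]
  simp only [Real.sqrt_mul (eigs_nonneg hA _)]

lemma matSqrt_kronecker_mul_kronecker_mul_matSqrt_kronecker {A₀ A₁ : Matrix m m ℝ}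
    {B₀ B₁ : Matrix p p ℝ} (hA₀ : A₀.PosSemidef) (hB₀ : B₀.PosSemidef) :
    matSqrt (A₀ ⊗ₖ B₀) * (A₁ ⊗ₖ B₁) * matSqrt (A₀ ⊗ₖ B₀)
      = (matSqrt A₀ * A₁ * matSqrt A₀) ⊗ₖ (matSqrt B₀ * B₁ * matSqrt B₀) := by
  rw [matSqrt_kronecker hA₀ hB₀, mul_kronecker_mul, mul_kronecker_mul]

end matSqrt

/-- With `α` the eigenvalues of `V₀^{1/2}V₁V₀^{1/2}` and `β` those of
`U₀^{1/2}U₁U₀^{1/2}`, one has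
`tr((K₀^{1/2} K₁ K₀^{1/2})^{1/2}) = Σ_p Σ_q √(α_p β_q)`. -/
theorem trace_sqrt_kronecker_eigenvalues {n : ℕ}
    (U₀ U₁ V₀ V₁ : Matrix (Fin n) (Fin n) ℝ)
    (hU₀ : U₀.PosDef) (hU₁ : U₁.PosDef) (hV₀ : V₀.PosDef) (hV₁ : V₁.PosDef) :
    (matSqrt (matSqrt (V₀ ⊗ₖ U₀) * (V₁ ⊗ₖ U₁) * matSqrt (V₀ ⊗ₖ U₀))).trace
      = ∑ p : Fin n, ∑ q : Fin n,
          Real.sqrt (eigs (matSqrt V₀ * V₁ * matSqrt V₀) p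
            * eigs (matSqrt U₀ * U₁ * matSqrt U₀) q) := by
  rw [matSqrt_kronecker_mul_kronecker_mul_matSqrt_kronecker hV₀.posSemidef hU₀.posSemidef]
  exact trace_matSqrt_kronecker
    (posSemidef_matSqrt_mul_mul_matSqrt hV₀.posSemidef hV₁.posSemidef)
    (posSemidef_matSqrt_mul_mul_matSqrt hU₀.posSemidef hU₁.posSemidef)
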